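/- arXiv:1707.05095 — 9 statements merged into one kernel-verified Lean document; each statement's English description precedes it below -/
import Mathlib

section
/- Let A, B be n×n W-bounded-difference integer matrices, let C = A ⋆ B, let Δ ≥ 1 divide n, and define the approximation matrix tildeC by tildeC_{i,j} := min{ A_{r(i),k'} + B_{k',r(j)} : k' ∈ {Δ, 2Δ, …, n} }, where r(i) denotes the unique multiple of Δ with i ∈ I(r(i)). Then for all i, j ∈ {1,…,n}, |C_{i,j} − tildeC_{i,j}| ≤ 4ΔW. -/
/-- The `(min,+)`-product of two `n × n` integer matrices (indexed by `1,…,n`). -/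
def minplus (n : ℕ) (hn : 1 ≤ n) (A B : ℕ → ℕ → ℤ) (i j : ℕ) : ℤ :=
  (Finset.Icc 1 n).inf' (Finset.nonempty_Icc.mpr hn) (fun k => A i k + B k j)

/-- An `n × n` integer matrix `X` is `W`-bounded-difference. -/
def BoundedDiff (n : ℕ) (W : ℤ) (X : ℕ → ℕ → ℤ) : Prop :=
  (∀ i j, 1 ≤ i → i ≤ n → 1 ≤ j → j < n → |X i j - X i (j + 1)| ≤ W) ∧
  (∀ i j, 1 ≤ i → i < n → 1 ≤ j → j ≤ n → |X i j - X (i + 1) j| ≤ W)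

/-!
If every `k` can be replaced by a grid point `k'` (or conversely) at a cost of at most `4ΔW`,
the two minima differ by at most `4ΔW`. For a minimiser `k` of `C_{i,j}` the grid point `r(k)`
costs one rounding of each of the four indices of `A_{i,k}` and `B_{k,j}`; for a minimiser `k'`
of `tildeC_{i,j}`, only `r(i)` and `r(j)` have to be undone. A rounding moves an index by at most
`Δ`, and each unit step changes an entry by at most `W`.
-/

theorem abs_sub_le_mul_of_abs_sub_succ_le {f : ℕ → ℤ} {W : ℤ} {a b : ℕ} (hab : a ≤ b)
    (h : ∀ m, a ≤ m → m < b → |f m - f (m + 1)| ≤ W) : |f a - f b| ≤ W * (b - a) := by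
  induction b, hab using Nat.le_induction with
  | base => simp
  | succ m ham ih =>
    calc |f a - f (m + 1)| ≤ |f a - f m| + |f m - f (m + 1)| := abs_sub_le _ _ _
      _ ≤ W * (m - a) + W :=
          add_le_add (ih fun k hak hkm => h k hak (by omega)) (h m ham (by omega))
      _ = W * ((m + 1 : ℕ) - a) := by push_cast; ring

namespace BoundedDiff

variable {n : ℕ} {W : ℤ} {X : ℕ → ℕ → ℤ}

theorem abs_sub_le_mul_add (hX : BoundedDiff n W X) {i i' j j' : ℕ}
    (hi : 1 ≤ i) (hii' : i ≤ i') (hi' : i' ≤ n) (hj : 1 ≤ j) (hjj' : j ≤ j') (hj' : j' ≤ n) :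
    |X i j - X i' j'| ≤ W * ((i' - i) + (j' - j)) := by
  have hcol : |X i j - X i' j| ≤ W * (i' - i) :=
    abs_sub_le_mul_of_abs_sub_succ_le (f := fun m => X m j) hii' fun m him hmi' =>
      hX.2 m j (by omega) (by omega) hj (by omega)
  have hrow : |X i' j - X i' j'| ≤ W * (j' - j) :=
    abs_sub_le_mul_of_abs_sub_succ_le (f := X i') hjj' fun m hjm hmj' =>
      hX.1 i' m (by omega) hi' (by omega) (by omega)
  calc |X i j - X i' j'| ≤ |X i j - X i' j| + |X i' j - X i' j'| := abs_sub_le _ _ _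
    _ ≤ W * ((i' - i) + (j' - j)) := by rw [mul_add]; exact add_le_add hcol hrow

theorem abs_sub_le_two_mul (hX : BoundedDiff n W X) (hW : 0 ≤ W) {Δ i i' j j' : ℕ}
    (hi : 1 ≤ i) (hii' : i ≤ i') (hi'Δ : i' ≤ i + Δ) (hi' : i' ≤ n)
    (hj : 1 ≤ j) (hjj' : j ≤ j') (hj'Δ : j' ≤ j + Δ) (hj' : j' ≤ n) :
    |X i j - X i' j'| ≤ 2 * Δ * W := by
  have hshift : ((i' : ℤ) - i) + (j' - j) ≤ 2 * Δ := by omega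
  calc |X i j - X i' j'| ≤ W * ((i' - i) + (j' - j)) :=
        hX.abs_sub_le_mul_add hi hii' hi' hj hjj' hj'
    _ ≤ W * (2 * Δ) := mul_le_mul_of_nonneg_left hshift hW
    _ = 2 * Δ * W := by ring

end BoundedDiff

theorem Finset.inf'_le_inf'_add {α β γ : Type*} [LinearOrder γ] [Add γ] {s : Finset α}
    {t : Finset β} (hs : s.Nonempty) (ht : t.Nonempty) {f : α → γ} {g : β → γ} {c : γ}
    (h : ∀ a ∈ s, ∃ b ∈ t, g b ≤ f a + c) : t.inf' ht g ≤ s.inf' hs f + c := by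
  obtain ⟨a, ha, hfa⟩ := s.exists_mem_eq_inf' hs f
  obtain ⟨b, hb, hgb⟩ := h a ha
  rw [hfa]
  exact (t.inf'_le g hb).trans hgb

theorem approx_error_general (n Δ : ℕ) (hn : 1 ≤ n)
    (W : ℤ) (hW : 0 ≤ W) (A B : ℕ → ℕ → ℤ)
    (hA : BoundedDiff n W A) (hB : BoundedDiff n W B)
    (r : ℕ → ℕ)
    (hr : ∀ i, 1 ≤ i → i ≤ n → Δ ∣ r i ∧ r i - Δ < i ∧ i ≤ r i ∧ r i ≤ n)
    (hmul : ((Finset.Icc 1 n).filter (fun k => Δ ∣ k)).Nonempty)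
    (tC : ℕ → ℕ → ℤ)
    (htC : ∀ i j, 1 ≤ i → i ≤ n → 1 ≤ j → j ≤ n →
      tC i j = ((Finset.Icc 1 n).filter (fun k => Δ ∣ k)).inf' hmul
        (fun k' => A (r i) k' + B k' (r j))) :
    ∀ i j, 1 ≤ i → i ≤ n → 1 ≤ j → j ≤ n →
      |minplus n hn A B i j - tC i j| ≤ 4 * (Δ : ℤ) * W := by
  have hround : ∀ i, 1 ≤ i → i ≤ n → i ≤ r i ∧ r i ≤ i + Δ ∧ r i ≤ n := fun i hi hin => by
    have := hr i hi hin
    omega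
  intro i j hi hin hj hjn
  obtain ⟨hir, hriΔ, hrin⟩ := hround i hi hin
  obtain ⟨hjr, hrjΔ, hrjn⟩ := hround j hj hjn
  rw [htC i j hi hin hj hjn, abs_sub_le_iff, sub_le_iff_le_add', sub_le_iff_le_add']
  constructor
  · refine Finset.inf'_le_inf'_add _ _ fun k hk => ⟨k, Finset.mem_of_mem_filter k hk, ?_⟩
    obtain ⟨hk, hkn⟩ := Finset.mem_Icc.mp (Finset.mem_of_mem_filter k hk)
    have hkΔ := Nat.le_add_right k Δ
    have hAk := abs_le.mp (hA.abs_sub_le_two_mul hW hi hir hriΔ hrin hk le_rfl hkΔ hkn)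
    have hBk := abs_le.mp (hB.abs_sub_le_two_mul hW hk le_rfl hkΔ hkn hj hjr hrjΔ hrjn)
    linarith [hAk.1, hBk.1]
  · refine Finset.inf'_le_inf'_add _ _ fun k hk => ⟨r k, ?_, ?_⟩
    all_goals obtain ⟨hk, hkn⟩ := Finset.mem_Icc.mp hk
    · obtain ⟨hΔr, -, hkr, hrkn⟩ := hr k hk hkn
      exact Finset.mem_filter.mpr ⟨Finset.mem_Icc.mpr ⟨hk.trans hkr, hrkn⟩, hΔr⟩
    · obtain ⟨hkr, hrkΔ, hrkn⟩ := hround k hk hkn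
      have hAk := abs_le.mp (hA.abs_sub_le_two_mul hW hi hir hriΔ hrin hk hkr hrkΔ hrkn)
      have hBk := abs_le.mp (hB.abs_sub_le_two_mul hW hk hkr hrkΔ hrkn hj hjr hrjΔ hrjn)
      linarith [hAk.2, hBk.2]

/-- For `W`-BD matrices `A, B`, `C = A ⋆ B`, `Δ ∣ n`, and the approximation
`tildeC_{i,j} = min { A_{r(i),k'} + B_{k',r(j)} : k' ∈ {Δ, 2Δ, …, n} }`,
where `r(i)` is the unique multiple of `Δ` with `i ∈ I(r(i))`, we have
`|C_{i,j} - tildeC_{i,j}| ≤ 4ΔW` for all `i, j ∈ {1,…,n}`. -/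
theorem approx_error (n Δ : ℕ) (hn : 1 ≤ n) (hΔ : 1 ≤ Δ) (hdvd : Δ ∣ n)
    (W : ℤ) (hW : 0 ≤ W) (A B : ℕ → ℕ → ℤ)
    (hA : BoundedDiff n W A) (hB : BoundedDiff n W B)
    (r : ℕ → ℕ)
    (hr : ∀ i, 1 ≤ i → i ≤ n → Δ ∣ r i ∧ r i - Δ < i ∧ i ≤ r i ∧ r i ≤ n)
    (hmul : ((Finset.Icc 1 n).filter (fun k => Δ ∣ k)).Nonempty)
    (tC : ℕ → ℕ → ℤ)
    (htC : ∀ i j, 1 ≤ i → i ≤ n → 1 ≤ j → j ≤ n →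
      tC i j = ((Finset.Icc 1 n).filter (fun k => Δ ∣ k)).inf' hmul
        (fun k' => A (r i) k' + B k' (r j))) :
    ∀ i j, 1 ≤ i → i ≤ n → 1 ≤ j → j ≤ n →
      |minplus n hn A B i j - tC i j| ≤ 4 * (Δ : ℤ) * W :=
  approx_error_general n Δ hn W hW A B hA hB r hr hmul tC htC
end

section
/- Let A, B be n×n integer matrices, C = A ⋆ B, and let tildeC be an n×n integer matrix satisfying |C_{x,y} − tildeC_{x,y}| ≤ 4D for all x,y, where D ≥ 0 is an integer. Fix indices i, k, j, i^r, j^r ∈ {1,…,n} and define A^r_{i,k} := A_{i,k} + B_{k,j^r} − tildeC_{i,j^r} and B^r_{k,j} := B_{k,j} − B_{k,j^r} + tildeC_{i^r,j^r} − tildeC_{i^r,j}. If the three triples (i,k,j^r), (i^r,k,j^r), (i^r,k,j) are all weakly relevant, i.e., |A_{i,k} + B_{k,j^r} − C_{i,j^r}| ≤ 16D, |A_{i^r,k} + B_{k,j^r} − C_{i^r,j^r}| ≤ 16D, and |A_{i^r,k} + B_{k,j} − C_{i^r,j}| ≤ 16D, then |A^r_{i,k}| ≤ 20D and |B^r_{k,j}|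 ≤ 40D. -/
/-!
For a weakly relevant triple `(x,k,y)`, replacing `C_{x,y}` by its `4D`-approximation moves
`A_{x,k} + B_{k,y} - C_{x,y}` by at most `4D`, so `|A_{x,k} + B_{k,y} - tildeC_{x,y}| ≤ 20D`.
This is the bound on `Aʳ_{i,k}`, and `Bʳ_{k,j}` is the difference of two such quantities,
for the triples `(iʳ,k,j)` and `(iʳ,k,jʳ)` (the term `A_{iʳ,k}` cancels).
-/

theorem abs_add_sub_approx_le {ι κ μ : Type*} {A : ι → κ → ℤ} {B : κ → μ → ℤ}
    {C tC : ι → μ → ℤ} {D : ℤ} {x : ι} {k : κ} {y : μ}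
    (hrel : |A x k + B k y - C x y| ≤ 16 * D) (happrox : |C x y - tC x y| ≤ 4 * D) :
    |A x k + B k y - tC x y| ≤ 20 * D :=
  calc |A x k + B k y - tC x y| ≤ |A x k + B k y - C x y| + |C x y - tC x y| :=
        abs_sub_le _ _ _
    _ ≤ 16 * D + 4 * D := add_le_add hrel happrox
    _ = 20 * D := by ring

theorem perturbed_entries_small_general (n : ℕ)
    (A B C tC : ℕ → ℕ → ℤ)
    (D : ℤ)
    (happrox : ∀ x y, 1 ≤ x → x ≤ n → 1 ≤ y → y ≤ n → |C x y - tC x y| ≤ 4 * D)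
    (i k j ir jr : ℕ)
    (hi : 1 ≤ i ∧ i ≤ n) (hj : 1 ≤ j ∧ j ≤ n)
    (hir : 1 ≤ ir ∧ ir ≤ n) (hjr : 1 ≤ jr ∧ jr ≤ n)
    (Ar Br : ℕ → ℕ → ℤ)
    (hAr : Ar i k = A i k + B k jr - tC i jr)
    (hBr : Br k j = B k j - B k jr + tC ir jr - tC ir j)
    (h1 : |A i k + B k jr - C i jr| ≤ 16 * D)
    (h2 : |A ir k + B k jr - C ir jr| ≤ 16 * D)
    (h3 : |A ir k + B k j - C ir j| ≤ 16 * D) :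
    |Ar i k| ≤ 20 * D ∧ |Br k j| ≤ 40 * D := by
  have hrel : ∀ x y, 1 ≤ x ∧ x ≤ n → 1 ≤ y ∧ y ≤ n → |A x k + B k y - C x y| ≤ 16 * D →
      |A x k + B k y - tC x y| ≤ 20 * D := fun x y hx hy h ↦
    abs_add_sub_approx_le h (happrox x y hx.1 hx.2 hy.1 hy.2)
  refine ⟨hAr ▸ hrel i jr hi hjr h1, ?_⟩
  have hBr_sub : Br k j = (A ir k + B k j - tC ir j) - (A ir k + B k jr - tC ir jr) := by
    rw [hBr]; ring
  calc |Br k j| ≤ |A ir k + B k j - tC ir j| + |A ir k + B k jr - tC ir jr| :=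
        hBr_sub ▸ abs_sub _ _
    _ ≤ 20 * D + 20 * D := add_le_add (hrel ir j hir hj h3) (hrel ir jr hir hjr h2)
    _ = 40 * D := by ring

/-- If `C = A ⋆ B`, `tildeC` is an entrywise additive `4D`-approximation of `C`, and the
triples `(i,k,jʳ)`, `(iʳ,k,jʳ)`, `(iʳ,k,j)` are all weakly relevant (their value is within
`16D` of the corresponding entry of `C`), then the perturbed entries
`Aʳ_{i,k} = A_{i,k} + B_{k,jʳ} - tildeC_{i,jʳ}` and
`Bʳ_{k,j} = B_{k,j} - B_{k,jʳ} + tildeC_{iʳ,jʳ} - tildeC_{iʳ,j}`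
satisfy `|Aʳ_{i,k}| ≤ 20D` and `|Bʳ_{k,j}| ≤ 40D`. -/
theorem perturbed_entries_small (n : ℕ) (hn : 1 ≤ n)
    (A B C tC : ℕ → ℕ → ℤ)
    (hC : ∀ i j, C i j = minplus n hn A B i j)
    (D : ℤ) (hD : 0 ≤ D)
    (happrox : ∀ x y, 1 ≤ x → x ≤ n → 1 ≤ y → y ≤ n → |C x y - tC x y| ≤ 4 * D)
    (i k j ir jr : ℕ)
    (hi : 1 ≤ i ∧ i ≤ n) (hk : 1 ≤ k ∧ k ≤ n) (hj : 1 ≤ j ∧ j ≤ n)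
    (hir : 1 ≤ ir ∧ ir ≤ n) (hjr : 1 ≤ jr ∧ jr ≤ n)
    (Ar Br : ℕ → ℕ → ℤ)
    (hAr : Ar i k = A i k + B k jr - tC i jr)
    (hBr : Br k j = B k j - B k jr + tC ir jr - tC ir j)
    (h1 : |A i k + B k jr - C i jr| ≤ 16 * D)
    (h2 : |A ir k + B k jr - C ir jr| ≤ 16 * D)
    (h3 : |A ir k + B k j - C ir j| ≤ 16 * D) :
    |Ar i k| ≤ 20 * D ∧ |Br k j| ≤ 40 * D :=
  perturbed_entries_small_general n A B C tC D happrox i k j ir jr hi hj hir hjr Ar Br hAr hBr h1 h2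
    h3
end

section
/- Let G = (U ∪ V, E) be a bipartite graph with |U| = |V| = n nodes per partition and |E| = m edges, and let C be the number of 4-cycles of G. If m ≥ 2n^{3/2} (equivalently, m² ≥ 4n³), then C ≥ m⁴/(32n⁴) (equivalently, 32n⁴·C ≥ m⁴). -/
/-!
Write `d u` for the degree of `u ∈ U` and `S = ∑_{v < v'} N(v, v')`. Counting paths of length two
through each `u` gives `∑_u d u ^ 2 = 2S + m`, so Cauchy–Schwarz over `U` yields
`m² ≤ n (2S + m)`. Since `N² = 2 binom(N, 2) + N`, Cauchy–Schwarz over the at most `n²/2` pairs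
`v < v'` yields `S² ≤ (n²/2) (2C + S)`. Under the density assumption the linear terms are
absorbed, leaving `m² ≤ 4nS` and `S² ≤ 2n²C`, which combine to `m⁴ ≤ 32n⁴C`.
-/

open Finset

section Codegree

variable {α β : Type*} [Fintype α] [DecidableEq α] [DecidableEq β] (E : Finset (α × β))

def codegree (v v' : β) : ℕ := #{u | (u, v) ∈ E ∧ (u, v') ∈ E}

theorem codegree_comm (v v' : β) : codegree E v v' = codegree E v' v := by
  simp only [codegree, and_comm]

variable [Fintype β]

theorem sum_card_fiber_fst : ∑ u, #{v | (u, v) ∈ E} = #E := by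
  simp only [card_filter]
  rw [← Fintype.sum_prod_type' (f := fun u v => if (u, v) ∈ E then 1 else 0), ← card_filter]
  simp

theorem sum_card_fiber_snd : ∑ v, #{u | (u, v) ∈ E} = #E := by
  simp only [card_filter]
  rw [sum_comm, ← sum_card_fiber_fst E]
  simp only [card_filter]

theorem sum_codegree_self : ∑ v, codegree E v v = #E := by
  simp only [codegree, and_self, sum_card_fiber_snd]

theorem sum_sum_codegree : ∑ v, ∑ v', codegree E v v' = ∑ u, #{v | (u, v) ∈ E} ^ 2 := by
  simp only [codegree, card_filter, sq, sum_mul_sum, ite_zero_mul_ite_zero, mul_one]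
  exact (sum_congr rfl fun _ _ => sum_comm).trans sum_comm

theorem card_sq_le_card_mul_sum_sum_codegree :
    #E ^ 2 ≤ Fintype.card α * ∑ v, ∑ v', codegree E v v' := by
  rw [sum_sum_codegree, ← sum_card_fiber_fst E]
  exact sq_sum_le_card_mul_sum_sq

end Codegree

theorem sum_sum_eq_two_nsmul_sum_lt_add_sum_diag {β M : Type*} [Fintype β] [LinearOrder β]
    [AddCommMonoid M] (f : β → β → M) (hf : ∀ a b, f a b = f b a) :
    ∑ a, ∑ b, f a b = 2 • ∑ p : β × β with p.1 < p.2, f p.1 p.2 + ∑ a, f a a := by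
  have hsplit : ∀ p : β × β, f p.1 p.2 = (if p.1 < p.2 then f p.1 p.2 else 0)
      + (if p.2 < p.1 then f p.2 p.1 else 0) + (if p.1 = p.2 then f p.1 p.1 else 0) := by
    rintro ⟨a, b⟩
    rcases lt_trichotomy a b with h | rfl | h
    · simp [h, h.not_gt, h.ne]
    · simp
    · simp [h, h.not_gt, h.ne', hf a b]
  have hswap : ∑ p : β × β, (if p.2 < p.1 then f p.2 p.1 else 0)
      = ∑ p : β × β, (if p.1 < p.2 then f p.1 p.2 else 0) :=
    Fintype.sum_equiv (Equiv.prodComm β β) _ _ fun _ => rfl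
  rw [← Fintype.sum_prod_type', Fintype.sum_congr _ _ hsplit, sum_add_distrib, sum_add_distrib,
    hswap, ← two_nsmul, ← sum_filter, Fintype.sum_prod_type]
  simp

theorem two_mul_card_filter_lt_add_card (β : Type*) [Fintype β] [LinearOrder β] :
    2 * #{p : β × β | p.1 < p.2} + Fintype.card β = Fintype.card β ^ 2 := by
  simpa [sq] using
    (sum_sum_eq_two_nsmul_sum_lt_add_sum_diag (fun _ _ : β => (1 : ℕ)) fun _ _ => rfl).symm

theorem two_mul_choose_two_add_self (k : ℕ) : 2 * k.choose 2 + k = k ^ 2 := by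
  induction k with
  | zero => simp
  | succ k ih =>
    rw [Nat.choose_succ_succ, Nat.choose_one_right]
    nlinarith [ih]

theorem sq_sum_le_card_mul_two_mul_sum_choose_two_add_sum {ι : Type*} (s : Finset ι)
    (f : ι → ℕ) :
    (∑ i ∈ s, f i) ^ 2 ≤ #s * (2 * ∑ i ∈ s, (f i).choose 2 + ∑ i ∈ s, f i) := by
  rw [mul_sum, ← sum_add_distrib]
  simp only [two_mul_choose_two_add_self]
  exact sq_sum_le_card_mul_sum_sq

/- Density forces `m ≥ 2n`, which turns the first bound into `m² ≤ 4nS`; together with density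
again this gives `S ≥ n²`, which absorbs the linear term of the second bound. -/
theorem pow_four_le_of_sq_le_of_sq_le {n m S C a : ℕ} (hm : m ^ 2 ≤ n * (2 * S + m))
    (hS : S ^ 2 ≤ a * (2 * C + S)) (ha : 2 * a ≤ n ^ 2) (hdense : 4 * n ^ 3 ≤ m ^ 2) :
    m ^ 4 ≤ 32 * n ^ 4 * C := by
  rcases Nat.eq_zero_or_pos n with rfl | hn
  · simp_all
  have h2n : 2 * n ≤ m := by nlinarith
  have hmS : m ^ 2 ≤ 4 * n * S := by nlinarith
  have hnS : n ^ 2 ≤ S := by nlinarith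
  have hSC : S ^ 2 ≤ 2 * n ^ 2 * C := by nlinarith
  calc m ^ 4 = (m ^ 2) ^ 2 := by ring
    _ ≤ (4 * n * S) ^ 2 := by gcongr
    _ = 16 * n ^ 2 * S ^ 2 := by ring
    _ ≤ 16 * n ^ 2 * (2 * n ^ 2 * C) := by gcongr
    _ = 32 * n ^ 4 * C := by ring

/-- In a bipartite graph with `n` vertices per side and `m` edges, if `m ≥ 2n^{3/2}`
(equivalently `m² ≥ 4n³`), then the number `C` of 4-cycles satisfies `C ≥ m⁴/(32n⁴)`
(equivalently `32n⁴·C ≥ m⁴`). Here `N v v'` is the number of common neighbors of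
`v, v'`, and `C = ∑_{v < v'} binom(N(v,v'), 2)`. -/
theorem four_cycles_lower_bound (n : ℕ) (E : Finset (Fin n × Fin n))
    (m : ℕ) (hm : m = E.card)
    (N : Fin n → Fin n → ℕ)
    (hN : ∀ v v', N v v' = (univ.filter (fun u : Fin n => (u, v) ∈ E ∧ (u, v') ∈ E)).card)
    (C : ℕ)
    (hC : C = ∑ p ∈ univ.filter (fun p : Fin n × Fin n => p.1 < p.2),
      Nat.choose (N p.1 p.2) 2)
    (hdense : m ^ 2 ≥ 4 * n ^ 3) :
    32 * n ^ 4 * C ≥ m ^ 4 := by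
  obtain rfl : N = codegree E := funext₂ hN
  subst hm hC
  have hpairs := two_mul_card_filter_lt_add_card (Fin n)
  have hdegrees := card_sq_le_card_mul_sum_sum_codegree E
  rw [sum_sum_eq_two_nsmul_sum_lt_add_sum_diag _ (codegree_comm E), sum_codegree_self,
    smul_eq_mul] at hdegrees
  rw [Fintype.card_fin] at hpairs hdegrees
  exact pow_four_le_of_sq_le_of_sq_le hdegrees
    (sq_sum_le_card_mul_two_mul_sum_choose_two_add_sum _ _) (by omega) hdense
end

section
/- Let G = (U ∪ V, E) be a bipartite graph with |U| = |V| = n ≥ 1 nodes per partition, let N = ∑_{{v,v'} ⊆ V, v ≠ v'} N(v,v'), and let C = ∑_{{v,v'} ⊆ V, v ≠ v'} binom(N(v,v'), 2) be the number of 4-cycles of G. If N ≥ n(n−1), then C ≥ N²/(2n²) (equivalently, 2n²·C ≥ N²). -/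
open Finset

theorem Nat.sq_eq_two_mul_choose_two_add_self (x : ℕ) : x ^ 2 = 2 * x.choose 2 + x := by
  induction x with
  | zero => rfl
  | succ x ih =>
    rw [Nat.choose_succ_succ', Nat.choose_one_right]
    linarith

theorem sq_sum_le_four_mul_card_mul_sum_choose_two {ι : Type*} (s : Finset ι) (f : ι → ℕ)
    (hmean : 2 * #s ≤ ∑ i ∈ s, f i) :
    (∑ i ∈ s, f i) ^ 2 ≤ 4 * #s * ∑ i ∈ s, (f i).choose 2 := by
  have hcs : (∑ i ∈ s, f i) ^ 2 ≤ #s * ∑ i ∈ s, f i ^ 2 := sq_sum_le_card_mul_sum_sq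
  simp only [Nat.sq_eq_two_mul_choose_two_add_self (f _), sum_add_distrib, ← mul_sum] at hcs
  -- `hcs` reads `N² ≤ k (2C + N)`; the mean bound `2k ≤ N` absorbs the linear term `kN ≤ N²/2`.
  nlinarith

theorem Fintype.two_mul_card_product_filter_lt {α : Type*} [Fintype α] [LinearOrder α] :
    2 * #{p : α × α | p.1 < p.2} = Fintype.card α * (Fintype.card α - 1) := by
  rw [Fintype.card_product_filter_lt, Nat.choose_two_right]
  exact Nat.mul_div_cancel' (Nat.even_mul_pred_self _).two_dvd

theorem four_cycles_from_incidences_general (n : ℕ)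
    (Ncn : Fin n → Fin n → ℕ)
    (N : ℕ)
    (hN : N = ∑ p ∈ univ.filter (fun p : Fin n × Fin n => p.1 < p.2), Ncn p.1 p.2)
    (C : ℕ)
    (hC : C = ∑ p ∈ univ.filter (fun p : Fin n × Fin n => p.1 < p.2),
      Nat.choose (Ncn p.1 p.2) 2)
    (hbig : N ≥ n * (n - 1)) :
    2 * n ^ 2 * C ≥ N ^ 2 := by
  have hpairs : 2 * #{p : Fin n × Fin n | p.1 < p.2} = n * (n - 1) := by
    simpa using Fintype.two_mul_card_product_filter_lt (α := Fin n)
  subst hN hC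
  calc _ ≤ 4 * #{p : Fin n × Fin n | p.1 < p.2} * _ :=
        sq_sum_le_four_mul_card_mul_sum_choose_two _ _ (hpairs ▸ hbig)
    _ ≤ 2 * n ^ 2 * _ := by
        refine Nat.mul_le_mul_right _ ?_
        calc 4 * #{p : Fin n × Fin n | p.1 < p.2} = 2 * (n * (n - 1)) := by rw [← hpairs]; ring
          _ ≤ 2 * n ^ 2 := by rw [sq]; gcongr; exact Nat.sub_le n 1

/-- In a bipartite graph with `n ≥ 1` vertices per side, let
`N = ∑_{v < v'} N(v,v')` and let `C = ∑_{v < v'} binom(N(v,v'), 2)` be the number of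
4-cycles. If `N ≥ n(n-1)`, then `C ≥ N²/(2n²)` (equivalently `2n²·C ≥ N²`). -/
theorem four_cycles_from_incidences (n : ℕ) (hn : 1 ≤ n)
    (E : Finset (Fin n × Fin n))
    (Ncn : Fin n → Fin n → ℕ)
    (hNcn : ∀ v v', Ncn v v' = (univ.filter (fun u : Fin n => (u, v) ∈ E ∧ (u, v') ∈ E)).card)
    (N : ℕ)
    (hN : N = ∑ p ∈ univ.filter (fun p : Fin n × Fin n => p.1 < p.2), Ncn p.1 p.2)
    (C : ℕ)
    (hC : C = ∑ p ∈ univ.filter (fun p : Fin n × Fin n => p.1 < p.2),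
      Nat.choose (Ncn p.1 p.2) 2)
    (hbig : N ≥ n * (n - 1)) :
    2 * n ^ 2 * C ≥ N ^ 2 :=
  four_cycles_from_incidences_general n Ncn N hN C hC hbig
end

section
/- Let X_1, …, X_n be independent random variables on a probability space, each taking values in [0,1], and set X = ∑_{i=1}^n X_i. Then for any real c ≥ 1, Pr[X > (1 + 6ec)·E[X] + c·log n] ≤ n^{−c}, where e is Euler's number and log is the natural logarithm. -/
open MeasureTheory ProbabilityTheory Real

/-!
Chernoff's method at `t = 1`. By convexity, `exp (t x) ≤ 1 + (eᵗ - 1) x` on `[0, 1]`, so each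
`Xᵢ` has `mgf ≤ exp ((eᵗ - 1) E[Xᵢ])`; independence multiplies these into
`mgf X 1 ≤ exp ((e - 1) E[X])`, and Markov's inequality for `exp X` gives
`Pr[X ≥ a] ≤ exp ((e - 1) E[X] - a)`. For `a = (1 + 6ec) E[X] + c log n` the mean term is
nonpositive, leaving `exp (-c log n) = n^{-c}`.
-/

lemma exp_mul_le_one_add_mul {t x : ℝ} (hx : x ∈ Set.Icc (0 : ℝ) 1) :
    exp (t * x) ≤ 1 + (exp t - 1) * x := by
  have h := convexOn_exp.2 (Set.mem_univ 0) (Set.mem_univ t) (sub_nonneg.2 hx.2) hx.1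
    (sub_add_cancel 1 x)
  simp only [smul_eq_mul, mul_zero, zero_add, exp_zero, mul_one, mul_comm x t] at h
  linarith

namespace ProbabilityTheory

variable {Ω ι : Type*} [MeasurableSpace Ω] {μ : Measure Ω} [Fintype ι] {X : ι → Ω → ℝ}

lemma sum_mem_Icc_card_of_mem_Icc_zero_one (hb : ∀ i, ∀ᵐ ω ∂μ, X i ω ∈ Set.Icc (0 : ℝ) 1) :
    ∀ᵐ ω ∂μ, ∑ i, X i ω ∈ Set.Icc (0 : ℝ) (Fintype.card ι) := by
  filter_upwards [ae_all_iff.2 hb] with ω hω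
  refine ⟨Finset.sum_nonneg fun i _ ↦ (hω i).1, ?_⟩
  simpa using Finset.sum_le_sum fun i (_ : i ∈ Finset.univ) ↦ (hω i).2

variable [IsProbabilityMeasure μ]

lemma mgf_le_exp_of_mem_Icc_zero_one {Y : Ω → ℝ} (hY : AEMeasurable Y μ)
    (hb : ∀ᵐ ω ∂μ, Y ω ∈ Set.Icc (0 : ℝ) 1) (t : ℝ) :
    mgf Y μ t ≤ exp ((exp t - 1) * μ[Y]) := by
  have hYint : Integrable Y μ := .of_mem_Icc 0 1 hY hb
  calc mgf Y μ t ≤ μ[fun ω ↦ 1 + (exp t - 1) * Y ω] :=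
        integral_mono_ae (integrable_exp_mul_of_mem_Icc hY hb)
          ((integrable_const 1).add (hYint.const_mul _))
          (hb.mono fun ω hω ↦ exp_mul_le_one_add_mul hω)
    _ = 1 + (exp t - 1) * μ[Y] := by
        rw [integral_add (integrable_const 1) (hYint.const_mul _), integral_const_mul]
        simp
    _ ≤ exp ((exp t - 1) * μ[Y]) := by linarith [add_one_le_exp ((exp t - 1) * μ[Y])]

lemma mgf_sum_le_exp_of_mem_Icc_zero_one (hindep : iIndepFun X μ)
    (hmeas : ∀ i, Measurable (X i)) (hb : ∀ i, ∀ᵐ ω ∂μ, X i ω ∈ Set.Icc (0 : ℝ) 1) (t : ℝ) :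
    mgf (fun ω ↦ ∑ i, X i ω) μ t ≤ exp ((exp t - 1) * μ[fun ω ↦ ∑ i, X i ω]) := by
  have hXint i : Integrable (X i) μ := .of_mem_Icc 0 1 (hmeas i).aemeasurable (hb i)
  calc mgf (fun ω ↦ ∑ i, X i ω) μ t = ∏ i, mgf (X i) μ t := by
        rw [← hindep.mgf_sum hmeas]; congr; ext; simp
    _ ≤ ∏ i, exp ((exp t - 1) * μ[X i]) := Finset.prod_le_prod (fun _ _ ↦ mgf_nonneg)
        fun i _ ↦ mgf_le_exp_of_mem_Icc_zero_one (hmeas i).aemeasurable (hb i) t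
    _ = exp ((exp t - 1) * μ[fun ω ↦ ∑ i, X i ω]) := by
        rw [← exp_sum, ← Finset.mul_sum, integral_finsetSum _ fun i _ ↦ hXint i]

lemma measureReal_sum_ge_le_exp_of_mem_Icc_zero_one (hindep : iIndepFun X μ)
    (hmeas : ∀ i, Measurable (X i)) (hb : ∀ i, ∀ᵐ ω ∂μ, X i ω ∈ Set.Icc (0 : ℝ) 1)
    (a : ℝ) {t : ℝ} (ht : 0 ≤ t) :
    μ.real {ω | a ≤ ∑ i, X i ω} ≤ exp (-t * a + (exp t - 1) * μ[fun ω ↦ ∑ i, X i ω]) := by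
  have hint := integrable_exp_mul_of_mem_Icc (t := t)
    (Finset.univ.measurable_sum fun i _ ↦ hmeas i).aemeasurable
    (sum_mem_Icc_card_of_mem_Icc_zero_one hb)
  calc μ.real {ω | a ≤ ∑ i, X i ω}
      ≤ exp (-t * a) * mgf (fun ω ↦ ∑ i, X i ω) μ t := measure_ge_le_exp_mul_mgf a ht hint
    _ ≤ exp (-t * a) * exp ((exp t - 1) * μ[fun ω ↦ ∑ i, X i ω]) := by
        gcongr; exact mgf_sum_le_exp_of_mem_Icc_zero_one hindep hmeas hb t
    _ = _ := (exp_add _ _).symm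

end ProbabilityTheory

/-- Chernoff-type bound: if `X₁, …, Xₙ` are independent random variables with values in
`[0,1]` (almost surely) and `X = ∑ Xᵢ`, then for any real `c ≥ 1`,
`Pr[X > (1 + 6ec)·E[X] + c·log n] ≤ n^{-c}`. -/
theorem chernoff_bound {Ω : Type*} [MeasurableSpace Ω]
    (μ : Measure Ω) [IsProbabilityMeasure μ]
    (n : ℕ) (X : Fin n → Ω → ℝ)
    (hmeas : ∀ i, Measurable (X i))
    (hindep : iIndepFun X μ)
    (hbound : ∀ i, ∀ᵐ ω ∂μ, X i ω ∈ Set.Icc (0 : ℝ) 1)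
    (c : ℝ) (hc : 1 ≤ c) :
    μ {ω | (1 + 6 * Real.exp 1 * c) * (∫ ω', (∑ i, X i ω') ∂μ) + c * Real.log n
        < ∑ i, X i ω}
      ≤ ENNReal.ofReal ((n : ℝ) ^ (-c)) := by
  rcases n.eq_zero_or_pos with rfl | hn
  · -- the bound `0 ^ (-c)` is `0`, but so is the event `0 < 0`
    simp
  set m := ∫ ω, (∑ i, X i ω) ∂μ
  set a := (1 + 6 * Real.exp 1 * c) * m + c * Real.log n
  have hm : 0 ≤ m := integral_nonneg_of_ae <|
    (sum_mem_Icc_card_of_mem_Icc_zero_one hbound).mono fun ω hω ↦ hω.1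
  have hexponent : -1 * a + (Real.exp 1 - 1) * m ≤ Real.log n * (-c) := by
    have h6ec : Real.exp 1 - 2 ≤ 6 * Real.exp 1 * c := by
      nlinarith [Real.exp_one_lt_d9, Real.exp_pos 1]
    nlinarith [mul_le_mul_of_nonneg_right h6ec hm]
  calc μ {ω | a < ∑ i, X i ω} ≤ μ {ω | a ≤ ∑ i, X i ω} := measure_mono fun _ ↦ le_of_lt (α := ℝ)
    _ = ENNReal.ofReal (μ.real {ω | a ≤ ∑ i, X i ω}) := (ofReal_measureReal).symm
    _ ≤ ENNReal.ofReal ((n : ℝ) ^ (-c)) := by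
        gcongr
        rw [Real.rpow_def_of_pos (by exact_mod_cast hn)]
        exact (measureReal_sum_ge_le_exp_of_mem_Icc_zero_one hindep hmeas hbound a zero_le_one).trans
          (Real.exp_le_exp.2 hexponent)
end

section
/- Let A, B, tildeC be n×n integer matrices and fix indices i^r, j^r ∈ {1,…,n}. Define A^r_{i,k} := A_{i,k} + B_{k,j^r} − tildeC_{i,j^r} and B^r_{k,j} := B_{k,j} − B_{k,j^r} + tildeC_{i^r,j^r} − tildeC_{i^r,j} for all i, k, j. Then for all i, j ∈ {1,…,n}, (A ⋆ B)_{i,j} = (A^r ⋆ B^r)_{i,j} + tildeC_{i,j^r} − tildeC_{i^r,j^r} + tildeC_{i^r,j}. -/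
lemma Finset.inf'_add {ι G : Type*} [AddGroup G] [LinearOrder G] [AddRightMono G]
    (s : Finset ι) (f : ι → G) (a : G) (hs : s.Nonempty) :
    s.inf' hs f + a = s.inf' hs fun i ↦ f i + a :=
  map_finset_inf' (OrderIso.addRight a) hs f

theorem minplus_reweight (n : ℕ) (hn : 1 ≤ n) (A B : ℕ → ℕ → ℤ) (u p v : ℕ → ℤ) (i j : ℕ) :
    minplus n hn (fun i k ↦ A i k + u i + p k) (fun k j ↦ B k j - p k + v j) i j =
      minplus n hn A B i j + (u i + v j) := by
  rw [minplus, minplus, Finset.inf'_add]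
  congr 1
  funext k
  ring

theorem minplus_perturbation_recovery_general (n : ℕ) (hn : 1 ≤ n)
    (A B tC : ℕ → ℕ → ℤ)
    (ir jr : ℕ)
    (Ar Br : ℕ → ℕ → ℤ)
    (hAr : ∀ i k, Ar i k = A i k + B k jr - tC i jr)
    (hBr : ∀ k j, Br k j = B k j - B k jr + tC ir jr - tC ir j) :
    ∀ i j, 1 ≤ i → i ≤ n → 1 ≤ j → j ≤ n →
      minplus n hn A B i j = minplus n hn Ar Br i j + tC i jr - tC ir jr + tC ir j := by
  intro i j _ _ _ _
  have hAr_reweight : Ar = fun i k ↦ A i k + (-tC i jr) + B k jr := by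
    funext i k
    rw [hAr]
    ring
  have hBr_reweight : Br = fun k j ↦ B k j - B k jr + (tC ir jr - tC ir j) := by
    funext k j
    rw [hBr]
    ring
  rw [hAr_reweight, hBr_reweight, minplus_reweight]
  ring

/-- For the perturbed matrices `Aʳ_{i,k} = A_{i,k} + B_{k,jʳ} - tildeC_{i,jʳ}` and
`Bʳ_{k,j} = B_{k,j} - B_{k,jʳ} + tildeC_{iʳ,jʳ} - tildeC_{iʳ,j}`, the original product can
be recovered: `(A ⋆ B)_{i,j} = (Aʳ ⋆ Bʳ)_{i,j} + tildeC_{i,jʳ} - tildeC_{iʳ,jʳ} + tildeC_{iʳ,j}`. -/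
theorem minplus_perturbation_recovery (n : ℕ) (hn : 1 ≤ n)
    (A B tC : ℕ → ℕ → ℤ)
    (ir jr : ℕ) (hir : 1 ≤ ir ∧ ir ≤ n) (hjr : 1 ≤ jr ∧ jr ≤ n)
    (Ar Br : ℕ → ℕ → ℤ)
    (hAr : ∀ i k, Ar i k = A i k + B k jr - tC i jr)
    (hBr : ∀ k j, Br k j = B k j - B k jr + tC ir jr - tC ir j) :
    ∀ i j, 1 ≤ i → i ≤ n → 1 ≤ j → j ≤ n →
      minplus n hn A B i j = minplus n hn Ar Br i j + tC i jr - tC ir jr + tC ir j :=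
  minplus_perturbation_recovery_general n hn A B tC ir jr Ar Br hAr hBr
end

section
/- Let A, B be n×n matrices with nonnegative integer entries, and define A'_{i,j} := ⌈A_{i,j}/2⌉ and B'_{i,j} := ⌈B_{i,j}/2⌉ for all i, j. Then for all i, j ∈ {1,…,n}: (A ⋆ B)_{i,j} ≤ 2·(A' ⋆ B')_{i,j} ≤ (A ⋆ B)_{i,j} + 2. In particular, 2·(A' ⋆ B') is an entrywise overestimate of A ⋆ B with additive error at most 2. -/
section CeilHalf

variable {K : Type*} [Field K] [LinearOrder K] [IsStrictOrderedRing K] [FloorRing K]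

lemma le_two_mul_ceil_half (a : ℤ) : a ≤ 2 * ⌈(a : K) / 2⌉ := by
  have h : (a : K) ≤ 2 * ⌈(a : K) / 2⌉ := by linarith [Int.le_ceil ((a : K) / 2)]
  exact_mod_cast h

lemma two_mul_ceil_half_le (a : ℤ) : 2 * ⌈(a : K) / 2⌉ ≤ a + 1 := by
  have h : (2 * ⌈(a : K) / 2⌉ : K) < a + 2 := by linarith [Int.ceil_lt_add_one ((a : K) / 2)]
  have h' : 2 * ⌈(a : K) / 2⌉ < a + 2 := by exact_mod_cast h
  omega

end CeilHalf

section MinPlus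

variable (n : ℕ) (hn : 1 ≤ n)

lemma minplus_mono {A B C D : ℕ → ℕ → ℤ} (hAC : ∀ i k, A i k ≤ C i k)
    (hBD : ∀ k j, B k j ≤ D k j) (i j : ℕ) :
    minplus n hn A B i j ≤ minplus n hn C D i j :=
  Finset.inf'_mono_fun fun k _ => add_le_add (hAC i k) (hBD k j)

lemma minplus_const_mul {c : ℤ} (hc : 0 ≤ c) (A B : ℕ → ℕ → ℤ) (i j : ℕ) :
    minplus n hn (fun i k => c * A i k) (fun k j => c * B k j) i j =
      c * minplus n hn A B i j := by
  simp only [minplus, ← mul_add]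
  exact (Finset.apply_inf'_eq_inf'_comp _ _ fun _ _ =>
    (monotone_mul_left_of_nonneg hc).map_min).symm

lemma minplus_add_const (c d : ℤ) (A B : ℕ → ℕ → ℤ) (i j : ℕ) :
    minplus n hn (fun i k => A i k + c) (fun k j => B k j + d) i j =
      minplus n hn A B i j + (c + d) := by
  simp only [minplus, add_add_add_comm _ c]
  exact (Finset.apply_inf'_eq_inf'_comp _ (· + (c + d)) fun _ _ =>
    (min_add_add_right _ _ _).symm).symm

end MinPlus

theorem minplus_scaling_general (n : ℕ) (hn : 1 ≤ n)
    (A B : ℕ → ℕ → ℤ)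
    (A' B' : ℕ → ℕ → ℤ)
    (hA' : ∀ i j, A' i j = ⌈(A i j : ℚ) / 2⌉)
    (hB' : ∀ i j, B' i j = ⌈(B i j : ℚ) / 2⌉) :
    ∀ i j, 1 ≤ i → i ≤ n → 1 ≤ j → j ≤ n →
      minplus n hn A B i j ≤ 2 * minplus n hn A' B' i j ∧
      2 * minplus n hn A' B' i j ≤ minplus n hn A B i j + 2 := by
  intro i j _ _ _ _
  have hA_le : ∀ i k, A i k ≤ 2 * A' i k := fun i k => hA' i k ▸ le_two_mul_ceil_half _
  have hB_le : ∀ k j, B k j ≤ 2 * B' k j := fun k j => hB' k j ▸ le_two_mul_ceil_half _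
  have hA'_le : ∀ i k, 2 * A' i k ≤ A i k + 1 := fun i k => hA' i k ▸ two_mul_ceil_half_le _
  have hB'_le : ∀ k j, 2 * B' k j ≤ B k j + 1 := fun k j => hB' k j ▸ two_mul_ceil_half_le _
  have hscale := minplus_const_mul n hn zero_le_two A' B' i j
  constructor
  · calc minplus n hn A B i j
        ≤ minplus n hn (fun i k => 2 * A' i k) (fun k j => 2 * B' k j) i j :=
          minplus_mono n hn hA_le hB_le i j
      _ = 2 * minplus n hn A' B' i j := hscale
  · calc 2 * minplus n hn A' B' i j
        = minplus n hn (fun i k => 2 * A' i k) (fun k j => 2 * B' k j) i j := hscale.symm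
      _ ≤ minplus n hn (fun i k => A i k + 1) (fun k j => B k j + 1) i j :=
          minplus_mono n hn hA'_le hB'_le i j
      _ = minplus n hn A B i j + 2 := minplus_add_const n hn 1 1 A B i j

/-- Scaling step: for matrices `A, B` with nonnegative integer entries and
`A'_{i,j} = ⌈A_{i,j}/2⌉`, `B'_{i,j} = ⌈B_{i,j}/2⌉`, we have
`(A ⋆ B)_{i,j} ≤ 2·(A' ⋆ B')_{i,j} ≤ (A ⋆ B)_{i,j} + 2` for all `i, j ∈ {1,…,n}`;
i.e., `2·(A' ⋆ B')` overestimates `A ⋆ B` with additive error at most `2`. -/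
theorem minplus_scaling (n : ℕ) (hn : 1 ≤ n)
    (A B : ℕ → ℕ → ℤ)
    (hAnn : ∀ i j, 0 ≤ A i j) (hBnn : ∀ i j, 0 ≤ B i j)
    (A' B' : ℕ → ℕ → ℤ)
    (hA' : ∀ i j, A' i j = ⌈(A i j : ℚ) / 2⌉)
    (hB' : ∀ i j, B' i j = ⌈(B i j : ℚ) / 2⌉) :
    ∀ i j, 1 ≤ i → i ≤ n → 1 ≤ j → j ≤ n →
      minplus n hn A B i j ≤ 2 * minplus n hn A' B' i j ∧
      2 * minplus n hn A' B' i j ≤ minplus n hn A B i j + 2 :=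
  minplus_scaling_general n hn A B A' B' hA' hB'
end

section
/- Let A, B be n×n integer matrices, W ≥ 0 and Δ ≥ 1 integers, and suppose {1,…,n} is partitioned into sets K_1, …, K_{n/Δ} such that max_{k ∈ K_ℓ} A_{i,k} − min_{k ∈ K_ℓ} A_{i,k} ≤ ΔW for all i ∈ {1,…,n} and all ℓ. For each ℓ and j, let v(ℓ,j) := min{ B_{k,j} : k ∈ K_ℓ }, and define B' by B'_{k,j} := min{ B_{k,j}, v(ℓ,j) + 2ΔW } for k ∈ K_ℓ. Then A ⋆ B' = A ⋆ B. Moreover, B' satisfies max_{k ∈ K_ℓ} B'_{k,j} − min_{k ∈ K_ℓ} B'_{k,j} ≤ 2ΔW for all ℓ, j. -/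
namespace Finset

theorem inf'_eq_inf'_of_le_of_exists_le {ι α : Type*} [LinearOrder α] {t : Finset ι}
    (ht : t.Nonempty) {f g : ι → α}
    (hgf : ∀ k ∈ t, g k ≤ f k) (hfg : ∀ k ∈ t, ∃ k' ∈ t, f k' ≤ g k) :
    t.inf' ht g = t.inf' ht f :=
  le_antisymm (inf'_mono_fun hgf) <| le_inf' _ _ fun k hk => by
    obtain ⟨k', hk', hle⟩ := hfg k hk
    exact (inf'_le f hk').trans hle

variable {ι α : Type*} [AddCommGroup α] [LinearOrder α] [IsOrderedAddMonoid α]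
variable {s : Finset ι} (hs : s.Nonempty) {b b' : ι → α} {c : α}

theorem sup'_sub_inf'_le_of_eq_min_inf'_add (hc : 0 ≤ c)
    (hb' : ∀ k ∈ s, b' k = min (b k) (s.inf' hs b + c)) :
    s.sup' hs b' - s.inf' hs b' ≤ c := by
  have hsup : s.sup' hs b' ≤ s.inf' hs b + c :=
    sup'_le _ _ fun k hk => (hb' k hk).trans_le (min_le_right _ _)
  have hinf : s.inf' hs b ≤ s.inf' hs b' :=
    le_inf' _ _ fun k hk => (hb' k hk).symm ▸
      le_min (inf'_le b hk) (le_add_of_nonneg_right hc)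
  calc s.sup' hs b' - s.inf' hs b' ≤ s.inf' hs b + c - s.inf' hs b := sub_le_sub hsup hinf
    _ = c := add_sub_cancel_left _ _

theorem exists_add_le_add_of_eq_min_inf'_add {a : ι → α}
    (ha : s.sup' hs a - s.inf' hs a ≤ c)
    (hb' : ∀ k ∈ s, b' k = min (b k) (s.inf' hs b + c)) {k : ι} (hk : k ∈ s) :
    ∃ k' ∈ s, a k' + b k' ≤ a k + b' k := by
  rw [hb' k hk]
  rcases min_cases (b k) (s.inf' hs b + c) with ⟨hmin, -⟩ | ⟨hmin, -⟩
  · exact ⟨k, hk, by rw [hmin]⟩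
  · obtain ⟨k', hk', hbk'⟩ := exists_mem_eq_inf' hs b
    refine ⟨k', hk', ?_⟩
    have hak' : a k' ≤ a k + c := calc
      a k' ≤ s.sup' hs a := le_sup' a hk'
      _ ≤ s.inf' hs a + c := sub_le_iff_le_add'.mp ha
      _ ≤ a k + c := add_le_add_left (inf'_le a hk) c
    calc a k' + b k' ≤ a k + c + s.inf' hs b := add_le_add hak' hbk'.ge
      _ = a k + min (b k) (s.inf' hs b + c) := by rw [hmin, add_comm (s.inf' hs b), add_assoc]

end Finset

theorem truncation_preserves_minplus_general (n Δ : ℕ) (hn : 1 ≤ n)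
    (W : ℤ) (hW : 0 ≤ W)
    (A B : ℕ → ℕ → ℤ)
    (K : ℕ → Finset ℕ)
    (hKne : ∀ ℓ, ℓ ∈ Finset.Icc 1 (n / Δ) → (K ℓ).Nonempty)
    (hKsub : ∀ ℓ, ℓ ∈ Finset.Icc 1 (n / Δ) → K ℓ ⊆ Finset.Icc 1 n)
    (hKpart : ∀ k, k ∈ Finset.Icc 1 n → ∃! ℓ, ℓ ∈ Finset.Icc 1 (n / Δ) ∧ k ∈ K ℓ)
    (hAvar : ∀ i, 1 ≤ i → i ≤ n → ∀ ℓ (hℓ : ℓ ∈ Finset.Icc 1 (n / Δ)),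
      (K ℓ).sup' (hKne ℓ hℓ) (fun k => A i k) - (K ℓ).inf' (hKne ℓ hℓ) (fun k => A i k)
        ≤ (Δ : ℤ) * W)
    (B' : ℕ → ℕ → ℤ)
    (hB' : ∀ ℓ (hℓ : ℓ ∈ Finset.Icc 1 (n / Δ)), ∀ k ∈ K ℓ, ∀ j,
      B' k j = min (B k j) ((K ℓ).inf' (hKne ℓ hℓ) (fun k' => B k' j) + 2 * (Δ : ℤ) * W)) :
    (∀ i j, 1 ≤ i → i ≤ n → 1 ≤ j → j ≤ n →
      minplus n hn A B' i j = minplus n hn A B i j) ∧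
    (∀ ℓ (hℓ : ℓ ∈ Finset.Icc 1 (n / Δ)), ∀ j, 1 ≤ j → j ≤ n →
      (K ℓ).sup' (hKne ℓ hℓ) (fun k => B' k j) - (K ℓ).inf' (hKne ℓ hℓ) (fun k => B' k j)
        ≤ 2 * (Δ : ℤ) * W) := by
  have hΔW : 0 ≤ (Δ : ℤ) * W := mul_nonneg (Nat.cast_nonneg Δ) hW
  refine ⟨fun i j hi hin _ _ => ?_, fun ℓ hℓ j _ _ =>
    Finset.sup'_sub_inf'_le_of_eq_min_inf'_add _ (by positivity) fun k hk => hB' ℓ hℓ k hk j⟩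
  refine Finset.inf'_eq_inf'_of_le_of_exists_le _ (fun k hk => ?_) (fun k hk => ?_)
  all_goals obtain ⟨ℓ, ⟨hℓ, hkℓ⟩, -⟩ := hKpart k hk
  · exact add_le_add le_rfl ((hB' ℓ hℓ k hkℓ j).trans_le (min_le_left _ _))
  · have hAspread := (hAvar i hi hin ℓ hℓ).trans (by linarith : (Δ : ℤ) * W ≤ 2 * Δ * W)
    obtain ⟨k', hk', hle⟩ := Finset.exists_add_le_add_of_eq_min_inf'_add _ hAspread
      (fun k hk => hB' ℓ hℓ k hk j) hkℓ
    exact ⟨k', hKsub ℓ hℓ hk', hle⟩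

/-- Suppose `{1,…,n}` is partitioned into nonempty blocks `K_1, …, K_{n/Δ}` such that on
each block the entries of each row of `A` vary by at most `ΔW`. Let
`v(ℓ,j) = min{B_{k,j} : k ∈ K_ℓ}` and `B'_{k,j} = min{B_{k,j}, v(ℓ,j) + 2ΔW}` for
`k ∈ K_ℓ`. Then `A ⋆ B' = A ⋆ B`, and on each block the entries of each column of `B'`
vary by at most `2ΔW`. -/
theorem truncation_preserves_minplus (n Δ : ℕ) (hn : 1 ≤ n) (hΔ : 1 ≤ Δ) (hdvd : Δ ∣ n)
    (W : ℤ) (hW : 0 ≤ W)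
    (A B : ℕ → ℕ → ℤ)
    (K : ℕ → Finset ℕ)
    (hKne : ∀ ℓ, ℓ ∈ Finset.Icc 1 (n / Δ) → (K ℓ).Nonempty)
    (hKsub : ∀ ℓ, ℓ ∈ Finset.Icc 1 (n / Δ) → K ℓ ⊆ Finset.Icc 1 n)
    (hKpart : ∀ k, k ∈ Finset.Icc 1 n → ∃! ℓ, ℓ ∈ Finset.Icc 1 (n / Δ) ∧ k ∈ K ℓ)
    (hAvar : ∀ i, 1 ≤ i → i ≤ n → ∀ ℓ (hℓ : ℓ ∈ Finset.Icc 1 (n / Δ)),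
      (K ℓ).sup' (hKne ℓ hℓ) (fun k => A i k) - (K ℓ).inf' (hKne ℓ hℓ) (fun k => A i k)
        ≤ (Δ : ℤ) * W)
    (B' : ℕ → ℕ → ℤ)
    (hB' : ∀ ℓ (hℓ : ℓ ∈ Finset.Icc 1 (n / Δ)), ∀ k ∈ K ℓ, ∀ j,
      B' k j = min (B k j) ((K ℓ).inf' (hKne ℓ hℓ) (fun k' => B k' j) + 2 * (Δ : ℤ) * W)) :
    (∀ i j, 1 ≤ i → i ≤ n → 1 ≤ j → j ≤ n →
      minplus n hn A B' i j = minplus n hn A B i j) ∧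
    (∀ ℓ (hℓ : ℓ ∈ Finset.Icc 1 (n / Δ)), ∀ j, 1 ≤ j → j ≤ n →
      (K ℓ).sup' (hKne ℓ hℓ) (fun k => B' k j) - (K ℓ).inf' (hKne ℓ hℓ) (fun k => B' k j)
        ≤ 2 * (Δ : ℤ) * W) :=
  truncation_preserves_minplus_general n Δ hn W hW A B K hKne hKsub hKpart hAvar B' hB'
end

section
/- Let A, B be n×n W-bounded-difference integer matrices, let Δ ≥ 1 divide n, and let tildeC be an n×n integer matrix that is constant on Δ-blocks, i.e., tildeC_{i,j} = tildeC_{r(i),r(j)} for all i,j, where r(i) is the unique multiple of Δ with i ∈ I(r(i)). For each round r in a finite sequence of rounds with fixed indices i^r, j^r ∈ {1,…,n}, define A^r_{i,k} := A_{i,k} + B_{k,j^r} − tildeC_{i,j^r} and B^r_{k,j} := B_{k,j} − B_{k,j^r} + tildeC_{i^r,j^r} − tildeC_{i^r,j}. Then for all i', k', j' divisible by Δ, all (i,k,j) ∈ I(i') × I(k') × I(j'), and every round r: |A^r_{i,k} − A^r_{i',k'}| ≤ 4ΔW and |B^r_{k,j} − B^r_{k',j'}| ≤ 4ΔW. Consequently,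 if for all rounds r one has |A^r_{i,k}| > 48ΔW or |B^r_{k,j}| > 48ΔW (strongly uncovered), then for all rounds r one has |A^r_{i',k'}| > 44ΔW or |B^r_{k',j'}| > 44ΔW (approximately uncovered); and if the latter holds, then for all rounds r one has |A^r_{i,k}| > 40ΔW or |B^r_{k,j}| > 40ΔW (weakly uncovered). -/
theorem Nat.eq_of_dvd_of_lt_add_of_lt_add {Δ a b : ℕ} (ha : Δ ∣ a) (hb : Δ ∣ b)
    (hab : a < b + Δ) (hba : b < a + Δ) : a = b := by
  have h₁ := Nat.eq_zero_of_dvd_of_lt (Nat.dvd_sub ha hb) (by omega)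
  have h₂ := Nat.eq_zero_of_dvd_of_lt (Nat.dvd_sub hb ha) (by omega)
  omega

theorem abs_sub_le_nsmul_of_abs_sub_succ_le {α : Type*} [AddCommGroup α] [LinearOrder α]
    [IsOrderedAddMonoid α] {f : ℕ → α} {W : α} {a b : ℕ} (hab : a ≤ b)
    (hf : ∀ m, a ≤ m → m < b → |f m - f (m + 1)| ≤ W) : |f a - f b| ≤ (b - a) • W := by
  induction b, hab using Nat.le_induction with
  | base => simp
  | succ m ham ih =>
    calc |f a - f (m + 1)| ≤ |f a - f m| + |f m - f (m + 1)| := abs_sub_le _ _ _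
      _ ≤ (m - a) • W + W :=
        add_le_add (ih fun l hal hlm => hf l hal (by omega)) (hf m ham (by omega))
      _ = (m + 1 - a) • W := by rw [Nat.sub_add_comm ham, succ_nsmul]

theorem lt_abs_or_lt_abs_of_abs_sub_le {α : Type*} [AddCommGroup α] [LinearOrder α]
    [IsOrderedAddMonoid α] {a b a' b' c d e : α} (ha : |a - a'| ≤ d) (hb : |b - b'| ≤ d)
    (hcde : c + d ≤ e) (h : e < |a| ∨ e < |b|) : c < |a'| ∨ c < |b'| := by
  have key : ∀ x x' : α, |x - x'| ≤ d → e < |x| → c < |x'| := fun x x' hxx' hx =>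
    lt_of_add_lt_add_right <| calc
      c + d ≤ e := hcde
      _ < |x| := hx
      _ ≤ |x'| + |x - x'| := sub_le_iff_le_add'.mp (abs_sub_abs_le_abs_sub x x')
      _ ≤ |x'| + d := add_le_add_right hxx' _
  exact h.imp (key a a' ha) (key b b' hb)

namespace BoundedDiff

variable {n : ℕ} {W : ℤ} {X : ℕ → ℕ → ℤ}

theorem abs_sub_le (hX : BoundedDiff n W X) {i i' k k' : ℕ} (hi : 1 ≤ i) (hii' : i ≤ i')
    (hi' : i' ≤ n) (hk : 1 ≤ k) (hkk' : k ≤ k') (hk' : k' ≤ n) :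
    |X i k - X i' k'| ≤ (i' - i + (k' - k)) • W :=
  calc |X i k - X i' k'| ≤ |X i k - X i' k| + |X i' k - X i' k'| := _root_.abs_sub_le _ _ _
    _ ≤ (i' - i) • W + (k' - k) • W := add_le_add
        (abs_sub_le_nsmul_of_abs_sub_succ_le (f := fun m => X m k) hii'
          fun m him hmi' => hX.2 m k (by omega) (by omega) hk (by omega))
        (abs_sub_le_nsmul_of_abs_sub_succ_le (f := fun m => X i' m) hkk'
          fun m hkm hmk' => hX.1 i' m (by omega) hi' (by omega) (by omega))
    _ = (i' - i + (k' - k)) • W := (add_nsmul _ _ _).symm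

end BoundedDiff

theorem eq_of_mem_block {n Δ x x' : ℕ} {r : ℕ → ℕ}
    (hr : ∀ i, 1 ≤ i → i ≤ n → Δ ∣ r i ∧ r i - Δ < i ∧ i ≤ r i ∧ r i ≤ n)
    (hx' : Δ ∣ x') (hx'n : x' ≤ n) (hx : x' - Δ < x) (hxx' : x ≤ x') : r x = x' := by
  obtain ⟨hrx, hrx₁, hrx₂, -⟩ := hr x (by omega) (by omega)
  exact Nat.eq_of_dvd_of_lt_add_of_lt_add hrx hx' (by omega) (by omega)

def roundA (A B C : ℕ → ℕ → ℤ) (c i k : ℕ) : ℤ := A i k + B k c - C i c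

def roundB (B C : ℕ → ℕ → ℤ) (a c k j : ℕ) : ℤ := B k j - B k c + C a c - C a j

section Round

variable {n Δ i i' k k' j j' a c : ℕ} {W : ℤ} {A B C : ℕ → ℕ → ℤ}

theorem abs_roundA_sub_le (hA : BoundedDiff n W A) (hB : BoundedDiff n W B) (hW : 0 ≤ W)
    (hi : i' - Δ < i) (hii' : i ≤ i') (hi' : i' ≤ n)
    (hk : k' - Δ < k) (hkk' : k ≤ k') (hk' : k' ≤ n)
    (hc : 1 ≤ c) (hcn : c ≤ n) (hC : C i c = C i' c) :
    |roundA A B C c i k - roundA A B C c i' k'| ≤ 4 * Δ * W :=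
  calc |roundA A B C c i k - roundA A B C c i' k'|
      = |(A i k - A i' k') + (B k c - B k' c)| := by
        rw [roundA, roundA, hC]; ring_nf
    _ ≤ |A i k - A i' k'| + |B k c - B k' c| := abs_add_le _ _
    _ ≤ (i' - i + (k' - k)) • W + (k' - k + (c - c)) • W := add_le_add
        (hA.abs_sub_le (by omega) hii' hi' (by omega) hkk' hk')
        (hB.abs_sub_le (by omega) hkk' hk' hc le_rfl hcn)
    _ ≤ 4 * Δ * W := by
        rw [← add_nsmul, nsmul_eq_mul]
        exact mul_le_mul_of_nonneg_right (by omega) hW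

theorem abs_roundB_sub_le (hB : BoundedDiff n W B) (hW : 0 ≤ W)
    (hk : k' - Δ < k) (hkk' : k ≤ k') (hk' : k' ≤ n)
    (hj : j' - Δ < j) (hjj' : j ≤ j') (hj' : j' ≤ n)
    (hc : 1 ≤ c) (hcn : c ≤ n) (hC : C a j = C a j') :
    |roundB B C a c k j - roundB B C a c k' j'| ≤ 4 * Δ * W :=
  calc |roundB B C a c k j - roundB B C a c k' j'|
      = |(B k j - B k' j') - (B k c - B k' c)| := by
        rw [roundB, roundB, hC]; ring_nf
    _ ≤ |B k j - B k' j'| + |B k c - B k' c| := abs_sub _ _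
    _ ≤ (k' - k + (j' - j)) • W + (k' - k + (c - c)) • W := add_le_add
        (hB.abs_sub_le (by omega) hkk' hk' (by omega) hjj' hj')
        (hB.abs_sub_le (by omega) hkk' hk' hc le_rfl hcn)
    _ ≤ 4 * Δ * W := by
        rw [← add_nsmul, nsmul_eq_mul]
        exact mul_le_mul_of_nonneg_right (by omega) hW

end Round

theorem uncovered_relations_general (n Δ : ℕ)
    (W : ℤ) (hW : 0 ≤ W) (A B : ℕ → ℕ → ℤ)
    (hA : BoundedDiff n W A) (hB : BoundedDiff n W B)
    (r : ℕ → ℕ)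
    (hr : ∀ i, 1 ≤ i → i ≤ n → Δ ∣ r i ∧ r i - Δ < i ∧ i ≤ r i ∧ r i ≤ n)
    (tC : ℕ → ℕ → ℤ)
    (htCblock : ∀ i j, 1 ≤ i → i ≤ n → 1 ≤ j → j ≤ n → tC i j = tC (r i) (r j))
    (ρ : ℕ) (ir jr : ℕ → ℕ)
    (hij : ∀ t, t ∈ Finset.Icc 1 ρ → (1 ≤ ir t ∧ ir t ≤ n) ∧ (1 ≤ jr t ∧ jr t ≤ n))
    (Ar Br : ℕ → ℕ → ℕ → ℤ)
    (hAr : ∀ t, t ∈ Finset.Icc 1 ρ → ∀ i k, Ar t i k = A i k + B k (jr t) - tC i (jr t))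
    (hBr : ∀ t, t ∈ Finset.Icc 1 ρ → ∀ k j,
      Br t k j = B k j - B k (jr t) + tC (ir t) (jr t) - tC (ir t) j) :
    ∀ i' k' j', Δ ∣ i' → Δ ∣ k' → Δ ∣ j' →
      1 ≤ i' → i' ≤ n → 1 ≤ k' → k' ≤ n → 1 ≤ j' → j' ≤ n →
      ∀ i k j, i' - Δ < i → i ≤ i' → k' - Δ < k → k ≤ k' → j' - Δ < j → j ≤ j' →
        (∀ t, t ∈ Finset.Icc 1 ρ →
          |Ar t i k - Ar t i' k'| ≤ 4 * (Δ : ℤ) * W ∧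
          |Br t k j - Br t k' j'| ≤ 4 * (Δ : ℤ) * W) ∧
        ((∀ t, t ∈ Finset.Icc 1 ρ →
            48 * (Δ : ℤ) * W < |Ar t i k| ∨ 48 * (Δ : ℤ) * W < |Br t k j|) →
          (∀ t, t ∈ Finset.Icc 1 ρ →
            44 * (Δ : ℤ) * W < |Ar t i' k'| ∨ 44 * (Δ : ℤ) * W < |Br t k' j'|)) ∧
        ((∀ t, t ∈ Finset.Icc 1 ρ →
            44 * (Δ : ℤ) * W < |Ar t i' k'| ∨ 44 * (Δ : ℤ) * W < |Br t k' j'|) →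
          (∀ t, t ∈ Finset.Icc 1 ρ →
            40 * (Δ : ℤ) * W < |Ar t i k| ∨ 40 * (Δ : ℤ) * W < |Br t k j|)) := by
  rintro i' k' j' hΔi' - hΔj' - hi'n - hk'n - hj'n i k j hi hii' hk hkk' hj hjj'
  have htC_row : ∀ c, 1 ≤ c → c ≤ n → tC i c = tC i' c := fun c hc hcn => by
    rw [htCblock i c (by omega) (by omega) hc hcn, htCblock i' c (by omega) hi'n hc hcn,
      eq_of_mem_block hr hΔi' hi'n hi hii', eq_of_mem_block hr hΔi' hi'n (by omega) le_rfl]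
  have htC_col : ∀ a, 1 ≤ a → a ≤ n → tC a j = tC a j' := fun a ha han => by
    rw [htCblock a j ha han (by omega) (by omega), htCblock a j' ha han (by omega) hj'n,
      eq_of_mem_block hr hΔj' hj'n hj hjj', eq_of_mem_block hr hΔj' hj'n (by omega) le_rfl]
  have hdiff : ∀ t ∈ Finset.Icc 1 ρ, |Ar t i k - Ar t i' k'| ≤ 4 * (Δ : ℤ) * W ∧
      |Br t k j - Br t k' j'| ≤ 4 * (Δ : ℤ) * W := fun t ht => by
    obtain ⟨⟨hir, hirn⟩, hjr, hjrn⟩ := hij t ht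
    rw [hAr t ht, hAr t ht, hBr t ht, hBr t ht]
    exact ⟨abs_roundA_sub_le hA hB hW hi hii' hi'n hk hkk' hk'n hjr hjrn (htC_row _ hjr hjrn),
      abs_roundB_sub_le hB hW hk hkk' hk'n hj hjj' hj'n hjr hjrn (htC_col _ hir hirn)⟩
  refine ⟨hdiff, fun h t ht => ?_, fun h t ht => ?_⟩
  · exact lt_abs_or_lt_abs_of_abs_sub_le (hdiff t ht).1 (hdiff t ht).2 (by linarith) (h t ht)
  · exact lt_abs_or_lt_abs_of_abs_sub_le (abs_sub_comm (Ar t i k) _ ▸ (hdiff t ht).1)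
      (abs_sub_comm (Br t k j) _ ▸ (hdiff t ht).2) (by linarith) (h t ht)

/-- For `W`-BD matrices `A, B`, `Δ ∣ n`, a matrix `tildeC` constant on `Δ`-blocks
(`tildeC_{i,j} = tildeC_{r(i),r(j)}` with `r(i)` the unique multiple of `Δ` with
`i ∈ I(r(i))`), and perturbed matrices `Aᵗ, Bᵗ` over rounds `t ∈ {1,…,ρ}` with indices
`iᵗ, jᵗ ∈ {1,…,n}`: for all block corners `i', k', j'` (multiples of `Δ` in `[1,n]`),
all `(i,k,j) ∈ I(i') × I(k') × I(j')`, and every round `t`,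
`|Aᵗ_{i,k} - Aᵗ_{i',k'}| ≤ 4ΔW` and `|Bᵗ_{k,j} - Bᵗ_{k',j'}| ≤ 4ΔW`.
Consequently strongly uncovered implies approximately uncovered, and approximately
uncovered implies weakly uncovered. -/
theorem uncovered_relations (n Δ : ℕ) (hn : 1 ≤ n) (hΔ : 1 ≤ Δ) (hdvd : Δ ∣ n)
    (W : ℤ) (hW : 0 ≤ W) (A B : ℕ → ℕ → ℤ)
    (hA : BoundedDiff n W A) (hB : BoundedDiff n W B)
    (r : ℕ → ℕ)
    (hr : ∀ i, 1 ≤ i → i ≤ n → Δ ∣ r i ∧ r i - Δ < i ∧ i ≤ r i ∧ r i ≤ n)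
    (tC : ℕ → ℕ → ℤ)
    (htCblock : ∀ i j, 1 ≤ i → i ≤ n → 1 ≤ j → j ≤ n → tC i j = tC (r i) (r j))
    (ρ : ℕ) (ir jr : ℕ → ℕ)
    (hij : ∀ t, t ∈ Finset.Icc 1 ρ → (1 ≤ ir t ∧ ir t ≤ n) ∧ (1 ≤ jr t ∧ jr t ≤ n))
    (Ar Br : ℕ → ℕ → ℕ → ℤ)
    (hAr : ∀ t, t ∈ Finset.Icc 1 ρ → ∀ i k, Ar t i k = A i k + B k (jr t) - tC i (jr t))
    (hBr : ∀ t, t ∈ Finset.Icc 1 ρ → ∀ k j,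
      Br t k j = B k j - B k (jr t) + tC (ir t) (jr t) - tC (ir t) j) :
    ∀ i' k' j', Δ ∣ i' → Δ ∣ k' → Δ ∣ j' →
      1 ≤ i' → i' ≤ n → 1 ≤ k' → k' ≤ n → 1 ≤ j' → j' ≤ n →
      ∀ i k j, i' - Δ < i → i ≤ i' → k' - Δ < k → k ≤ k' → j' - Δ < j → j ≤ j' →
        (∀ t, t ∈ Finset.Icc 1 ρ →
          |Ar t i k - Ar t i' k'| ≤ 4 * (Δ : ℤ) * W ∧
          |Br t k j - Br t k' j'| ≤ 4 * (Δ : ℤ) * W) ∧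
        ((∀ t, t ∈ Finset.Icc 1 ρ →
            48 * (Δ : ℤ) * W < |Ar t i k| ∨ 48 * (Δ : ℤ) * W < |Br t k j|) →
          (∀ t, t ∈ Finset.Icc 1 ρ →
            44 * (Δ : ℤ) * W < |Ar t i' k'| ∨ 44 * (Δ : ℤ) * W < |Br t k' j'|)) ∧
        ((∀ t, t ∈ Finset.Icc 1 ρ →
            44 * (Δ : ℤ) * W < |Ar t i' k'| ∨ 44 * (Δ : ℤ) * W < |Br t k' j'|) →
          (∀ t, t ∈ Finset.Icc 1 ρ →
            40 * (Δ : ℤ) * W < |Ar t i k| ∨ 40 * (Δ : ℤ) * W < |Br t k j|)) :=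
  uncovered_relations_general n Δ W hW A B hA hB r hr tC htCblock ρ ir jr hij Ar Br hAr hBr
end
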